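/- arXiv:1506.09100 — 4 statements merged into one kernel-verified Lean document; each statement's English description precedes it below -/
import Mathlib

section
/- For every basic type tree T representing a displacement sequence D, there exists a basic type tree T' of equal cost representing D such that T' contains at most one shifted node, and any shifted node of T' is the first idx or strc node on every root-to-leaf path (i.e., T' is a nice basic tree). -/
inductive TT : Type where
  | con : ℕ → TT
  | vec : ℕ → ℤ → TT → TT
  | idx : List ℤ → TT → TT
  | strc : List (ℤ × TT) → TT

theorem TT.sizeOf_snd_lt {ps : List (ℤ × TT)} (p : {x // x ∈ ps}) :
    sizeOf (p.1).2 < sizeOf (TT.strc ps) := by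
  obtain ⟨⟨a, b⟩, hp⟩ := p
  have := List.sizeOf_lt_of_mem hp
  simp at this ⊢
  omega

def flatten : TT → List ℤ
  | .con c => (List.range c).map (fun i => (i : ℤ))
  | .vec c d C => (List.range c).flatMap (fun i => (flatten C).map (· + (i : ℤ) * d))
  | .idx I C => I.flatMap (fun s => (flatten C).map (· + s))
  | .strc ps => ps.attach.flatMap (fun p => (flatten p.1.2).map (· + p.1.1))
decreasing_by
  all_goals first
  | exact TT.sizeOf_snd_lt _
  | decreasing_tactic

def cost (kc kv ki ks kl : ℕ) : TT → ℕ
  | .con _ => kc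
  | .vec _ _ C => kv + cost kc kv ki ks kl C
  | .idx I C => ki + I.length * kl + cost kc kv ki ks kl C
  | .strc ps => ks + 2 * ps.length * kl + (ps.attach.map (fun p => cost kc kv ki ks kl p.1.2)).sum
decreasing_by
  all_goals first
  | exact TT.sizeOf_snd_lt _
  | decreasing_tactic

/-- No shifted `idx`/`strc` node anywhere in the tree: every such node has first index 0. -/
def AllUnshifted : TT → Prop
  | .con _ => True
  | .vec _ _ C => AllUnshifted C
  | .idx I C => I.headD 0 = 0 ∧ AllUnshifted C
  | .strc ps => (ps.map Prod.fst).headD 0 = 0 ∧ ∀ p ∈ ps.attach, AllUnshifted p.1.2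
decreasing_by
  all_goals first
  | exact TT.sizeOf_snd_lt _
  | decreasing_tactic

/-- A nice basic tree: at most one shifted node, which must be the first
`idx` or `strc` node on every root-to-leaf path.  Equivalently, every
`idx`/`strc` node strictly below the first `idx`/`strc` node is unshifted. -/
def Nice : TT → Prop
  | .con _ => True
  | .vec _ _ C => Nice C
  | .idx _ C => AllUnshifted C
  | .strc ps => ∀ p ∈ ps.attach, AllUnshifted p.1.2
decreasing_by
  all_goals first
  | exact TT.sizeOf_snd_lt _
  | decreasing_tactic

/-! Normalise bottom-up: subtracting its first index from an `idx`/`strc` node makes it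
unshifted at no cost and translates its displacement sequence, and the translation is absorbed
into the indices of the nearest `idx`/`strc` ancestor. At the root the remaining translation is
put back into the first `idx`/`strc` layer. -/

def shiftFirst (s : ℤ) : TT → TT
  | .con c => .con c
  | .vec c d C => .vec c d (shiftFirst s C)
  | .idx I C => .idx (I.map (· + s)) C
  | .strc ps => .strc (ps.map (Prod.map (· + s) id))

lemma List.map_add_map_add (L : List ℤ) (a b : ℤ) :
    (L.map (· + a)).map (· + b) = L.map (· + (a + b)) := by
  simp [Function.comp_def, add_assoc]

lemma flatten_strc (ps : List (ℤ × TT)) :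
    flatten (.strc ps) = ps.flatMap (fun p => (flatten p.2).map (· + p.1)) := by
  rw [flatten]
  conv_rhs => rw [← List.attach_map_subtype_val ps, List.flatMap_map]

lemma flatten_strc_cons (p : ℤ × TT) (ps : List (ℤ × TT)) :
    flatten (.strc (p :: ps)) = (flatten p.2).map (· + p.1) ++ flatten (.strc ps) := by
  simp only [flatten_strc, List.flatMap_cons]

section Cost

variable (kc kv ki ks kl : ℕ)

lemma cost_strc (ps : List (ℤ × TT)) :
    cost kc kv ki ks kl (.strc ps)
      = ks + 2 * ps.length * kl + (ps.map (fun p => cost kc kv ki ks kl p.2)).sum := by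
  rw [cost]
  congr 2
  conv_rhs => rw [← List.attach_map_subtype_val ps, List.map_map]
  rfl

lemma cost_strc_cons (p : ℤ × TT) (ps : List (ℤ × TT)) :
    cost kc kv ki ks kl (.strc (p :: ps))
      = cost kc kv ki ks kl (.strc ps) + 2 * kl + cost kc kv ki ks kl p.2 := by
  simp only [cost_strc, List.length_cons, List.map_cons, List.sum_cons]
  ring

lemma cost_shiftFirst (s : ℤ) (T : TT) :
    cost kc kv ki ks kl (shiftFirst s T) = cost kc kv ki ks kl T := by
  cases T with
  | con c => rfl
  | vec c d C => rw [shiftFirst, cost, cost, cost_shiftFirst s C]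
  | idx I C => rw [shiftFirst, cost, cost, List.length_map]
  | strc ps =>
    rw [shiftFirst, cost_strc, cost_strc, List.length_map, List.map_map]
    rfl

end Cost

lemma allUnshifted_strc (ps : List (ℤ × TT)) :
    AllUnshifted (.strc ps) ↔ (ps.map Prod.fst).headD 0 = 0 ∧ ∀ p ∈ ps, AllUnshifted p.2 := by
  rw [AllUnshifted]
  exact and_congr_right fun _ =>
    ⟨fun h p hp => h ⟨p, hp⟩ (List.mem_attach _ _), fun h p _ => h p.1 p.2⟩

lemma nice_strc (ps : List (ℤ × TT)) :
    Nice (.strc ps) ↔ ∀ p ∈ ps, AllUnshifted p.2 := by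
  rw [Nice]
  exact ⟨fun h p hp => h ⟨p, hp⟩ (List.mem_attach _ _), fun h p _ => h p.1 p.2⟩

lemma nice_shiftFirst (s : ℤ) {T : TT} (h : AllUnshifted T) : Nice (shiftFirst s T) := by
  cases T with
  | con c => rw [shiftFirst, Nice]; trivial
  | vec c d C =>
    rw [AllUnshifted] at h
    rw [shiftFirst, Nice]
    exact nice_shiftFirst s h
  | idx I C =>
    rw [AllUnshifted] at h
    rw [shiftFirst, Nice]
    exact h.2
  | strc ps =>
    rw [shiftFirst, nice_strc, List.forall_mem_map]
    exact ((allUnshifted_strc ps).1 h).2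

lemma flatten_idx_map_add (s : ℤ) (I : List ℤ) (C : TT) :
    flatten (.idx (I.map (· + s)) C) = (flatten (.idx I C)).map (· + s) := by
  simp only [flatten, List.flatMap_map, List.map_flatMap, List.map_add_map_add]

lemma flatten_strc_map_add (s : ℤ) (ps : List (ℤ × TT)) :
    flatten (.strc (ps.map (Prod.map (· + s) id))) = (flatten (.strc ps)).map (· + s) := by
  simp only [flatten_strc, List.flatMap_map, List.map_flatMap, List.map_add_map_add,
    Prod.map_fst, Prod.map_snd, id]

lemma flatten_vec_of_eq_map_add {s : ℤ} {C N : TT} (h : flatten C = (flatten N).map (· + s))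
    (c : ℕ) (d : ℤ) : flatten (.vec c d C) = (flatten (.vec c d N)).map (· + s) := by
  simp only [flatten, h, List.map_flatMap, List.map_add_map_add]
  simp only [add_comm s]

lemma flatten_idx_of_eq_map_add {s : ℤ} {C N : TT} (h : flatten C = (flatten N).map (· + s))
    (I : List ℤ) : flatten (.idx I C) = flatten (.idx (I.map (· + s)) N) := by
  simp only [flatten, h, List.flatMap_map, List.map_add_map_add, add_comm s]

section NormalForm

variable (kc kv ki ks kl : ℕ)

/-- The last conjunct does not follow from the previous one: `shiftFirst` cannot translate
a root-to-leaf path of `N` that meets no `idx`/`strc` node. -/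
def IsUnshiftedForm (D : List ℤ) (k : ℕ) (s : ℤ) (N : TT) : Prop :=
  AllUnshifted N ∧ cost kc kv ki ks kl N = k ∧ D = (flatten N).map (· + s) ∧
    flatten (shiftFirst s N) = D

lemma isUnshiftedForm_idx (J : List ℤ) {N : TT} (hN : AllUnshifted N) :
    IsUnshiftedForm kc kv ki ks kl (flatten (.idx J N)) (cost kc kv ki ks kl (.idx J N))
      (J.headD 0) (.idx (J.map (· - J.headD 0)) N) := by
  have hJ : (J.map (· - J.headD 0)).map (· + J.headD 0) = J := by simp [Function.comp_def]
  refine ⟨by rw [AllUnshifted]; exact ⟨by cases J <;> simp, hN⟩, by simp [cost], ?_, ?_⟩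
  · rw [← flatten_idx_map_add, hJ]
  · rw [shiftFirst, hJ]

lemma isUnshiftedForm_strc (qs : List (ℤ × TT)) (hqs : ∀ q ∈ qs, AllUnshifted q.2) :
    IsUnshiftedForm kc kv ki ks kl (flatten (.strc qs)) (cost kc kv ki ks kl (.strc qs))
      ((qs.map Prod.fst).headD 0)
      (.strc (qs.map (Prod.map (· - (qs.map Prod.fst).headD 0) id))) := by
  set a := (qs.map Prod.fst).headD 0 with ha
  have hqs' : (qs.map (Prod.map (· - a) id)).map (Prod.map (· + a) id) = qs := by
    simp [Function.comp_def, Prod.map]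
  refine ⟨(allUnshifted_strc _).2 ⟨?_, List.forall_mem_map.2 fun q hq => hqs q hq⟩, ?_, ?_, ?_⟩
  · cases qs <;> simp [ha]
  · simp only [cost_strc, List.length_map, List.map_map]
    rfl
  · rw [← flatten_strc_map_add, hqs']
  · rw [shiftFirst, hqs']

lemma exists_allUnshifted_children (ps : List (ℤ × TT))
    (h : ∀ p ∈ ps, ∃ s N,
      IsUnshiftedForm kc kv ki ks kl (flatten p.2) (cost kc kv ki ks kl p.2) s N) :
    ∃ qs : List (ℤ × TT), (∀ q ∈ qs, AllUnshifted q.2) ∧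
      flatten (.strc qs) = flatten (.strc ps) ∧
      cost kc kv ki ks kl (.strc qs) = cost kc kv ki ks kl (.strc ps) := by
  induction ps with
  | nil => exact ⟨[], by simp, rfl, rfl⟩
  | cons p ps ih =>
    obtain ⟨qs, hqs, hflat, hcost⟩ := ih fun q hq => h q (List.mem_cons_of_mem _ hq)
    obtain ⟨s, N, hN, hNcost, hNflat, -⟩ := h p List.mem_cons_self
    refine ⟨(p.1 + s, N) :: qs, ?_, ?_, ?_⟩
    · simpa [hN] using hqs
    · simp only [flatten_strc_cons, hflat, hNflat, List.map_add_map_add, add_comm s]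
    · rw [cost_strc_cons, cost_strc_cons, hcost, hNcost]

theorem exists_isUnshiftedForm (T : TT) :
    ∃ s N, IsUnshiftedForm kc kv ki ks kl (flatten T) (cost kc kv ki ks kl T) s N := by
  match T with
  | .con c => exact ⟨0, .con c, by rw [AllUnshifted]; trivial, rfl, by simp, rfl⟩
  | .vec c d C =>
    obtain ⟨s, N, hN, hcost, hflat, hshift⟩ := exists_isUnshiftedForm C
    refine ⟨s, .vec c d N, by rwa [AllUnshifted], by rw [cost, cost, hcost],
      flatten_vec_of_eq_map_add hflat c d, ?_⟩
    rw [shiftFirst, flatten, flatten, hshift]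
  | .idx I C =>
    obtain ⟨s, N, hN, hcost, hflat, -⟩ := exists_isUnshiftedForm C
    have hcost' :
        cost kc kv ki ks kl (.idx I C) = cost kc kv ki ks kl (.idx (I.map (· + s)) N) := by
      rw [cost, cost, hcost, List.length_map]
    rw [hcost', flatten_idx_of_eq_map_add hflat]
    exact ⟨_, _, isUnshiftedForm_idx kc kv ki ks kl _ hN⟩
  | .strc ps =>
    obtain ⟨qs, hqs, hflat, hcost⟩ := exists_allUnshifted_children kc kv ki ks kl ps
      fun p hp => exists_isUnshiftedForm p.2
    rw [← hflat, ← hcost]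
    exact ⟨_, _, isUnshiftedForm_strc kc kv ki ks kl qs hqs⟩
termination_by sizeOf T
decreasing_by
  all_goals first
  | exact TT.sizeOf_snd_lt ⟨p, hp⟩
  | decreasing_tactic

end NormalForm

theorem stmt6 (kc kv ki ks kl : ℕ) (D : List ℤ) (T : TT) (hT : flatten T = D) :
    ∃ T' : TT, flatten T' = D ∧ cost kc kv ki ks kl T' = cost kc kv ki ks kl T ∧ Nice T' := by
  obtain ⟨s, N, hN, hcost, -, hshift⟩ := exists_isUnshiftedForm kc kv ki ks kl T
  exact ⟨shiftFirst s N, hshift.trans hT, (cost_shiftFirst kc kv ki ks kl s N).trans hcost,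
    nice_shiftFirst s hN⟩
end

section
/- Any cost-optimal basic tree representing a displacement sequence D contains at most one idx node with count 1, and for such a node there is no other idx or strc node on the path from it to the root. -/
/-- The tree contains no `idx` node with count 1 (a single index). -/
def NoIdx1 : TT → Prop
  | .con _ => True
  | .vec _ _ C => NoIdx1 C
  | .idx I C => I.length ≠ 1 ∧ NoIdx1 C
  | .strc ps => ∀ p ∈ ps.attach, NoIdx1 p.1.2
decreasing_by
  all_goals first
  | exact TT.sizeOf_snd_lt _
  | decreasing_tactic

/-- Every count-1 `idx` node has no other `idx` or `strc` node on its path to the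
root; together with the tree structure this implies there is at most one such node. -/
def GoodIdx1 : TT → Prop
  | .con _ => True
  | .vec _ _ C => GoodIdx1 C
  | .idx _ C => NoIdx1 C
  | .strc ps => ∀ p ∈ ps.attach, NoIdx1 p.1.2
decreasing_by
  all_goals first
  | exact TT.sizeOf_snd_lt _
  | decreasing_tactic

/-- `T` is a cost-optimal basic tree representing `D`
(cost model: all node constants equal to `K`, lookup cost 1). -/
def Optimal (K : ℕ) (D : List ℤ) (T : TT) : Prop :=
  flatten T = D ∧ ∀ T' : TT, flatten T' = D → cost K K K K 1 T ≤ cost K K K K 1 T'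

theorem List.map_add_map_add_s7 {α : Type*} [AddSemigroup α] (l : List α) (a b : α) :
    (l.map (· + a)).map (· + b) = l.map (· + (a + b)) := by
  simp only [List.map_map, Function.comp_def, add_assoc]

namespace TT

variable (kc kv ki ks kl : ℕ)

theorem flatten_strc (ps : List (ℤ × TT)) :
    flatten (.strc ps) = ps.flatMap (fun p => (flatten p.2).map (· + p.1)) := by
  rw [flatten, List.flatMap_subtype (g := fun p => (flatten p.2).map (· + p.1)) fun _ _ => rfl,
    List.unattach_attach]

theorem cost_strc (ps : List (ℤ × TT)) :
    cost kc kv ki ks kl (.strc ps)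
      = ks + 2 * ps.length * kl + (ps.map (fun p => cost kc kv ki ks kl p.2)).sum := by
  rw [cost, List.map_subtype (g := fun p => cost kc kv ki ks kl p.2) fun _ _ => rfl,
    List.unattach_attach]

theorem noIdx1_strc_iff (ps : List (ℤ × TT)) : NoIdx1 (.strc ps) ↔ ∀ p ∈ ps, NoIdx1 p.2 := by
  simp [NoIdx1]

theorem goodIdx1_strc_iff (ps : List (ℤ × TT)) :
    GoodIdx1 (.strc ps) ↔ ∀ p ∈ ps, NoIdx1 p.2 := by
  simp [GoodIdx1]

section Shift

variable {C C' : TT} {s : ℤ} (hf : flatten C = (flatten C').map (· + s))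
include hf

theorem flatten_vec_eq_map_add (c : ℕ) (d : ℤ) :
    flatten (.vec c d C) = (flatten (.vec c d C')).map (· + s) := by
  simp only [flatten, hf, List.map_flatMap, List.map_add_map_add_s7, add_comm s]

theorem flatten_idx_eq_map_add (I : List ℤ) :
    flatten (.idx I C) = (flatten (.idx I C')).map (· + s) := by
  simp only [flatten, hf, List.map_flatMap, List.map_add_map_add_s7, add_comm s]

theorem flatten_idx_map_add (I : List ℤ) :
    flatten (.idx (I.map (· + s)) C') = flatten (.idx I C) := by
  simp only [flatten, hf, List.flatMap_map, List.map_add_map_add_s7, add_comm s]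

theorem flatten_strc_append_cons_add (l₁ l₂ : List (ℤ × TT)) (a : ℤ) :
    flatten (.strc (l₁ ++ (a + s, C') :: l₂)) = flatten (.strc (l₁ ++ (a, C) :: l₂)) := by
  simp only [flatten_strc, List.flatMap_append, List.flatMap_cons, hf, List.map_add_map_add_s7,
    add_comm s]

end Shift

theorem cost_strc_append_cons_add_cost (l₁ l₂ : List (ℤ × TT)) (a b : ℤ) (C C' : TT) :
    cost kc kv ki ks kl (.strc (l₁ ++ (b, C') :: l₂)) + cost kc kv ki ks kl C
      = cost kc kv ki ks kl (.strc (l₁ ++ (a, C) :: l₂)) + cost kc kv ki ks kl C' := by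
  simp only [cost_strc, List.map_append, List.map_cons, List.sum_append, List.sum_cons,
    List.length_append, List.length_cons]
  omega

theorem exists_eq_map_add_of_not_noIdx1 (C : TT) (h : ¬ NoIdx1 C) :
    ∃ (s : ℤ) (C' : TT), flatten C = (flatten C').map (· + s) ∧
      cost kc kv ki ks kl C' + (ki + kl) ≤ cost kc kv ki ks kl C := by
  match C with
  | .con _ => simp [NoIdx1] at h
  | .vec c d C =>
    rw [NoIdx1] at h
    obtain ⟨s, C', hf, hc⟩ := exists_eq_map_add_of_not_noIdx1 C h
    refine ⟨s, .vec c d C', flatten_vec_eq_map_add hf c d, ?_⟩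
    simp only [cost]
    omega
  | .idx I C =>
    rw [NoIdx1] at h
    by_cases hI : I.length = 1
    · obtain ⟨s, rfl⟩ := List.length_eq_one_iff.mp hI
      exact ⟨s, C, by simp [flatten], by simp [cost]; omega⟩
    obtain ⟨s, C', hf, hc⟩ := exists_eq_map_add_of_not_noIdx1 C fun hC => h ⟨hI, hC⟩
    refine ⟨s, .idx I C', flatten_idx_eq_map_add hf I, ?_⟩
    simp only [cost]
    omega
  | .strc ps =>
    obtain ⟨⟨a, C⟩, hmem, hbad⟩ : ∃ p ∈ ps, ¬ NoIdx1 p.2 := by simpa [noIdx1_strc_iff] using h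
    have hlt := sizeOf_snd_lt ⟨_, hmem⟩
    obtain ⟨s, C', hf, hc⟩ := exists_eq_map_add_of_not_noIdx1 C hbad
    obtain ⟨l₁, l₂, rfl⟩ := List.append_of_mem hmem
    refine ⟨0, .strc (l₁ ++ (a + s, C') :: l₂), ?_, ?_⟩
    · simp [flatten_strc_append_cons_add hf]
    · have := cost_strc_append_cons_add_cost kc kv ki ks kl l₁ l₂ a (a + s) C C'
      omega
termination_by C
decreasing_by
  all_goals first | exact hlt | simp

theorem exists_cost_lt_of_not_goodIdx1 (hpos : 0 < ki + kl) (T : TT) (h : ¬ GoodIdx1 T) :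
    ∃ T' : TT, flatten T' = flatten T ∧ cost kc kv ki ks kl T' < cost kc kv ki ks kl T := by
  match T with
  | .con _ => simp [GoodIdx1] at h
  | .vec c d C =>
    rw [GoodIdx1] at h
    obtain ⟨C', hf, hc⟩ := exists_cost_lt_of_not_goodIdx1 hpos C h
    refine ⟨.vec c d C', by rw [flatten, flatten, hf], ?_⟩
    simp only [cost]
    omega
  | .idx I C =>
    rw [GoodIdx1] at h
    obtain ⟨s, C', hf, hc⟩ := exists_eq_map_add_of_not_noIdx1 kc kv ki ks kl C h
    refine ⟨.idx (I.map (· + s)) C', flatten_idx_map_add hf I, ?_⟩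
    simp only [cost, List.length_map]
    omega
  | .strc ps =>
    obtain ⟨⟨a, C⟩, hmem, hbad⟩ : ∃ p ∈ ps, ¬ NoIdx1 p.2 := by
      simpa [goodIdx1_strc_iff] using h
    obtain ⟨s, C', hf, hc⟩ := exists_eq_map_add_of_not_noIdx1 kc kv ki ks kl C hbad
    obtain ⟨l₁, l₂, rfl⟩ := List.append_of_mem hmem
    refine ⟨.strc (l₁ ++ (a + s, C') :: l₂), flatten_strc_append_cons_add hf l₁ l₂ a, ?_⟩
    have := cost_strc_append_cons_add_cost kc kv ki ks kl l₁ l₂ a (a + s) C C'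
    omega

end TT

theorem stmt7_general (K : ℕ) (D : List ℤ) (T : TT) (hopt : Optimal K D T) :
    GoodIdx1 T := by
  by_contra h
  obtain ⟨T', hf, hc⟩ := TT.exists_cost_lt_of_not_goodIdx1 K K K K 1 K.succ_pos T h
  exact (hopt.2 T' (hf.trans hopt.1)).not_gt hc

theorem stmt7 (K : ℕ) (hK : 0 < K) (D : List ℤ) (T : TT) (hopt : Optimal K D T) :
    GoodIdx1 T :=
  stmt7_general K D T hopt
end

section
/- If C = D[0,q-1] is a strided repetition of length q with stride d in a displacement sequence D of length n (q divides n), then D = flatten(vec(n/q, d, T)) for any basic tree T with flatten(T) = C. -/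
/-- The length-`q` prefix of `D` is a repetition: `q` divides `n = D.length` and
for all `1 ≤ i < n/q` and `0 ≤ j < q`, `D[j] - D[0] = D[i*q+j] - D[i*q]`. -/
def IsRepetition (D : List ℤ) (q : ℕ) : Prop :=
  0 < q ∧ q ∣ D.length ∧
    ∀ i j : ℕ, 1 ≤ i → i < D.length / q → j < q →
      D.getD j 0 - D.getD 0 0 = D.getD (i * q + j) 0 - D.getD (i * q) 0

/-- The length-`q` prefix of `D` is a strided repetition with stride `d`:
a repetition with additionally `D[(i+1)q] - D[iq] = d` for all `0 ≤ i < n/q - 1`. -/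
def IsStridedRepetition (D : List ℤ) (q : ℕ) (d : ℤ) : Prop :=
  IsRepetition D q ∧
    ∀ i : ℕ, i < D.length / q - 1 →
      D.getD ((i + 1) * q) 0 - D.getD (i * q) 0 = d

/-!
Telescoping the stride condition gives `D[i*q] = D[0] + i*d`, and the repetition condition then
gives `D[i*q + j] = D[j] + i*d` for `j < q`. Since `flatten (vec c d T)` is the concatenation of the
chunks `flatten T + i*d`, its entry at position `i*q + j` is also `D[j] + i*d`.
-/

theorem List.getElem?_flatMap_range_of_length_eq {α : Type*} {f : ℕ → List α} {q : ℕ}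
    (hf : ∀ i, (f i).length = q) {c k : ℕ} (hk : k < c * q) :
    ((List.range c).flatMap f)[k]? = (f (k / q))[k % q]? := by
  induction c with
  | zero => simp at hk
  | succ c ih =>
    rw [List.range_succ, List.flatMap_append]
    have hlen : ((List.range c).flatMap f).length = c * q := by simp [List.length_flatMap, hf]
    rcases lt_or_ge k (c * q) with hlt | hge
    · rw [List.getElem?_append_left (hlen ▸ hlt), ih hlt]
    · obtain ⟨r, rfl⟩ := Nat.exists_eq_add_of_le hge
      have hr : r < q := by rw [Nat.succ_mul] at hk; omega
      have hq : 0 < q := by omega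
      rw [List.getElem?_append_right (by omega), hlen, Nat.add_sub_cancel_left]
      have hdiv : (c * q + r) / q = c := by
        rw [Nat.add_comm, Nat.add_mul_div_right _ _ hq, Nat.div_eq_of_lt hr, zero_add]
      simp [hdiv, Nat.mod_eq_of_lt hr]

theorem List.eq_flatMap_range_map_add_of_getD {L : List ℤ} {q c : ℕ} {d : ℤ}
    (hlen : L.length = c * q)
    (h : ∀ i j, i < c → j < q → L.getD (i * q + j) 0 = L.getD j 0 + i * d) :
    (List.range c).flatMap (fun i : ℕ => (L.take q).map (· + (i : ℤ) * d)) = L := by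
  rcases Nat.eq_zero_or_pos c with rfl | hc
  · simp_all
  have hqL : q ≤ L.length := hlen ▸ Nat.le_mul_of_pos_left q hc
  have hchunk : ∀ i : ℕ, ((L.take q).map (· + (i : ℤ) * d)).length = q := by simp [hqL]
  refine List.ext_getElem? fun k => ?_
  rcases lt_or_ge k (c * q) with hk | hk
  · have hq : 0 < q := Nat.pos_of_ne_zero (by rintro rfl; simp at hk)
    have hkq : k % q < q := Nat.mod_lt k hq
    rw [List.getElem?_flatMap_range_of_length_eq hchunk hk, List.getElem?_map,
      List.getElem?_take_of_lt hkq, List.getElem?_eq_getElem (by omega),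
      List.getElem?_eq_getElem (by omega)]
    have := h (k / q) (k % q) (Nat.div_lt_of_lt_mul (by rwa [mul_comm])) hkq
    rw [Nat.div_add_mod', List.getD_eq_getElem _ _ (by omega),
      List.getD_eq_getElem _ _ (by omega)] at this
    simp [this]
  · rw [List.getElem?_eq_none, List.getElem?_eq_none (by omega)]
    simpa [List.length_flatMap, hqL] using hk

-- The defining equation runs over `List.range c` coerced to `List ℤ`; here the index stays in `ℕ`.
theorem flatten_vec (c : ℕ) (d : ℤ) (T : TT) :
    flatten (.vec c d T) =
      (List.range c).flatMap fun i : ℕ => (flatten T).map (· + (i : ℤ) * d) := by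
  rw [flatten]
  simp [List.flatMap_assoc]

namespace IsStridedRepetition

variable {D : List ℤ} {q : ℕ} {d : ℤ}

theorem getD_mul (h : IsStridedRepetition D q d) {i : ℕ} (hi : i < D.length / q) :
    D.getD (i * q) 0 = D.getD 0 0 + i * d := by
  induction i with
  | zero => simp
  | succ i ih =>
    have := h.2 i (by omega)
    rw [ih (by omega)] at this
    push_cast
    linarith

theorem getD_mul_add (h : IsStridedRepetition D q d) {i j : ℕ} (hi : i < D.length / q)
    (hj : j < q) : D.getD (i * q + j) 0 = D.getD j 0 + i * d := by
  rcases Nat.eq_zero_or_pos i with rfl | hi₀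
  · simp
  · have := h.1.2.2 i j hi₀ hi hj
    rw [h.getD_mul hi] at this
    linarith

end IsStridedRepetition

theorem stmt11 (D : List ℤ) (q : ℕ) (d : ℤ)
    (hrep : IsStridedRepetition D q d) (T : TT) (hT : flatten T = D.take q) :
    flatten (TT.vec (D.length / q) d T) = D := by
  rw [flatten_vec, hT]
  exact List.eq_flatMap_range_map_add_of_getD (Nat.div_mul_cancel hrep.1.2.1).symm
    fun _ _ hi hj => hrep.getD_mul_add hi hj
end

section
/- Unfolding a cost-optimal type DAG into a tree does not necessarily yield a cost-optimal type tree: there exists a displacement sequence D such that the tree obtained by unfolding some cost-minimal DAG representation of D (cost counted once per DAG node) is not a least-cost tree representation of D. -/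
/-- A node of a type DAG whose children are references into a pool of `m` nodes. -/
inductive DNode (m : ℕ) : Type where
  | con : ℕ → DNode m
  | vec : ℕ → ℤ → Fin m → DNode m
  | idx : List ℤ → Fin m → DNode m
  | strc : List (ℤ × Fin m) → DNode m

/-- The child references of a DAG node. -/
def DNode.children {m : ℕ} : DNode m → List (Fin m)
  | .con _ => []
  | .vec _ _ j => [j]
  | .idx _ j => [j]
  | .strc ps => ps.map Prod.snd

/-- A type DAG: a pool of nodes where every child reference points to a node with a
strictly smaller index (guaranteeing acyclicity); the root is the node with the
largest index. -/
structure DAG : Type where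
  m : ℕ
  hm : 0 < m
  nodes : Fin m → DNode m
  acyc : ∀ i : Fin m, ∀ j ∈ (nodes i).children, (j : ℕ) < (i : ℕ)

def DAG.root (G : DAG) : Fin G.m := ⟨G.m - 1, by have := G.hm; omega⟩

/-- Flattening of the sub-DAG rooted at node `i`. -/
def DAG.flattenAt (G : DAG) (i : Fin G.m) : List ℤ :=
  match hn : G.nodes i with
  | .con c => (List.range c).map (fun k => (k : ℤ))
  | .vec c d j =>
      (List.range c).flatMap (fun k => (G.flattenAt j).map (· + (k : ℤ) * d))
  | .idx I j => I.flatMap (fun s => (G.flattenAt j).map (· + s))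
  | .strc ps => ps.attach.flatMap (fun p => (G.flattenAt p.1.2).map (· + p.1.1))
termination_by (i : ℕ)
decreasing_by
  · exact G.acyc i j (by rw [hn]; simp [DNode.children])
  · exact G.acyc i j (by rw [hn]; simp [DNode.children])
  · exact G.acyc i p.1.2 (by
      rw [hn]; simp only [DNode.children, List.mem_map]
      exact ⟨p.1, p.2, rfl⟩)

/-- The displacement sequence represented by a type DAG. -/
def DAG.flatten (G : DAG) : List ℤ := G.flattenAt G.root

/-- The cost of a single DAG node: all node constants equal to `K`, lookup cost 1. -/
def DNode.cost (K : ℕ) {m : ℕ} : DNode m → ℕ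
  | .con _ => K
  | .vec _ _ _ => K
  | .idx I _ => K + I.length
  | .strc ps => K + 2 * ps.length

/-- The cost of a type DAG: each node is counted exactly once. -/
def DAG.cost (K : ℕ) (G : DAG) : ℕ :=
  ∑ i : Fin G.m, (G.nodes i).cost K

/-- Unfolding the sub-DAG rooted at node `i` into a type tree. -/
def DAG.unfoldAt (G : DAG) (i : Fin G.m) : TT :=
  match hn : G.nodes i with
  | .con c => .con c
  | .vec c d j => .vec c d (G.unfoldAt j)
  | .idx I j => .idx I (G.unfoldAt j)
  | .strc ps => .strc (ps.attach.map (fun p => (p.1.1, G.unfoldAt p.1.2)))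
termination_by (i : ℕ)
decreasing_by
  · exact G.acyc i j (by rw [hn]; simp [DNode.children])
  · exact G.acyc i j (by rw [hn]; simp [DNode.children])
  · exact G.acyc i p.1.2 (by
      rw [hn]; simp only [DNode.children, List.mem_map]
      exact ⟨p.1, p.2, rfl⟩)

/-- The tree obtained by unfolding a type DAG. -/
def DAG.unfold (G : DAG) : TT := G.unfoldAt G.root

/-!
Let `D = 0, 2, 4, …, 2(K+2), 2K+11`: consecutive entries of `D` are `2` apart, except the last
two, which are `7` apart. The DAG `strc [(0, vec (K+3) 2 ∘), (2K+11, ∘)]`, whose two references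
`∘` share one node `con 1`, represents `D` at cost `3K+4`. Unfolding it pays for `con 1` twice,
at cost `4K+4`, whereas the flat tree `idx D (con 1)` costs `3K+4`.

No DAG for `D` is cheaper. As `D` has no gap `1`, such a DAG contains a node `con 1`. As the last
gap of `D` is unique, `D` is neither an arithmetic progression nor a concatenation of at least two
translates of a list of length at least two. Descending from the root through nodes with a single
reference, which merely translate, one stops at a node that is neither `con` nor `vec`. An `idx`
node there has `K+4` offsets over a single point and costs `2K+4` besides `con 1`. A `strc` node
there has `K+4` entries, or has a child spanning more than one point, and then it, that child and
`con 1` cost at least `(K+4) + K + K`.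
-/

theorem List.infix_flatMap_of_mem' {α β : Type*} {f : α → List β} {a : α} {l : List α}
    (h : a ∈ l) : f a <:+: l.flatMap f := by
  obtain ⟨s, t, rfl⟩ := List.append_of_mem h
  exact ⟨s.flatMap f, t.flatMap f, by simp⟩

def copies (I X : List ℤ) : List ℤ := I.flatMap fun t => X.map (· + t)

theorem length_copies (I X : List ℤ) : (copies I X).length = I.length * X.length := by
  simp [copies, List.length_flatMap, List.sum_replicate]

theorem map_add_copies (I X : List ℤ) (s : ℤ) :
    (copies I X).map (· + s) = copies (I.map (· + s)) X := by
  simp [copies, List.map_flatMap, List.flatMap_map, Function.comp_def, add_assoc]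

theorem copies_singleton (I : List ℤ) (x : ℤ) : copies I [x] = I.map (x + ·) := by
  simp [copies, ← List.map_eq_flatMap]

def witnessSeq (K : ℕ) : List ℤ :=
  (List.range (K + 3)).map (fun k : ℕ => (k : ℤ) * 2) ++ [2 * (K : ℤ) + 11]

section witnessSeq

variable {K : ℕ}

theorem length_witnessSeq : (witnessSeq K).length = K + 4 := by
  simp [witnessSeq]

theorem getElem?_witnessSeq {t : ℕ} (ht : t < K + 4) :
    (witnessSeq K)[t]? = some (if t = K + 3 then 2 * (K : ℤ) + 11 else t * 2) := by
  unfold witnessSeq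
  split_ifs with h
  · subst h; simp
  · rw [List.getElem?_append_left (by simp only [List.length_map, List.length_range]; omega)]
    simp [List.getElem?_range (show t < K + 3 by omega)]

theorem witnessSeq_gap {L₁ L₂ : List ℤ} {u v : ℤ} (h : L₁ ++ u :: v :: L₂ = witnessSeq K) :
    v - u = if L₂ = [] then 7 else 2 := by
  have hlen : L₁.length + 2 + L₂.length = K + 4 := by
    simpa [length_witnessSeq, add_assoc, add_comm 2] using congrArg List.length h
  have hu : (witnessSeq K)[L₁.length]? = some u := by simp [← h]
  have hv : (witnessSeq K)[L₁.length + 1]? = some v := by simp [← h]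
  rw [getElem?_witnessSeq (by omega), Option.some_inj] at hu hv
  subst hu hv
  by_cases hL₂ : L₂ = []
  · subst hL₂
    have : L₁.length = K + 2 := by simpa using hlen
    rw [if_pos (by omega), if_neg (by omega), if_pos rfl, this]; push_cast; ring
  · have : L₂.length ≠ 0 := by simpa using hL₂
    rw [if_neg (by omega), if_neg (by omega), if_neg hL₂]; push_cast; ring

theorem witnessSeq_gap_of_infix {u v : ℤ} (h : [u, v] <:+: witnessSeq K) :
    v - u = 2 ∨ v - u = 7 := by
  obtain ⟨L₁, L₂, h⟩ := h
  rw [witnessSeq_gap (L₁ := L₁) (L₂ := L₂) (by simpa using h)]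
  split_ifs <;> simp

theorem le_one_of_map_range_infix_witnessSeq {c : ℕ} {s : ℤ}
    (h : (List.range c).map (fun k : ℕ => (k : ℤ) + s) <:+: witnessSeq K) : c ≤ 1 := by
  by_contra! hc
  obtain ⟨c, rfl⟩ : ∃ c', c = c' + 2 := ⟨c - 2, by omega⟩
  have : [s, 1 + s] <:+: witnessSeq K := by
    refine List.IsInfix.trans ?_ h
    simpa [List.range_succ_eq_map] using (List.prefix_append [s, 1 + s] _).isInfix
  have := witnessSeq_gap_of_infix this
  omega

theorem map_range_ne_witnessSeq (c : ℕ) (a d : ℤ) :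
    (List.range c).map (fun k : ℕ => a + k * d) ≠ witnessSeq K := by
  intro h
  have hc : c = K + 4 := by simpa [length_witnessSeq] using congrArg List.length h
  subst hc
  have entry (t : ℕ) (ht : t < K + 4) :
      a + t * d = if t = K + 3 then 2 * (K : ℤ) + 11 else t * 2 := by
    simpa [← h, List.getElem?_range ht] using getElem?_witnessSeq ht
  have h0 := entry 0 (by omega)
  have h1 := entry 1 (by omega)
  have hlast := entry (K + 3) (by omega)
  rw [if_neg (by omega)] at h0 h1
  rw [if_pos rfl] at hlast
  push_cast at h0 h1 hlast
  obtain rfl : d = 2 := by linarith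
  linarith

theorem copies_ne_witnessSeq {I X : List ℤ} (hI : 2 ≤ I.length) (hX : 2 ≤ X.length) :
    copies I X ≠ witnessSeq K := by
  intro h
  obtain ⟨Y, u, v, rfl⟩ : ∃ Y u v, X = Y ++ [u, v] := by
    rcases hr : X.reverse with _ | ⟨v, _ | ⟨u, Y⟩⟩
    all_goals have := congrArg List.length hr
    all_goals simp only [List.length_reverse, List.length_cons, List.length_nil] at this
    · omega
    · omega
    · exact ⟨Y.reverse, u, v, by simpa using congrArg List.reverse hr⟩
  obtain ⟨a, I', rfl⟩ : ∃ a I', I = a :: I' := by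
    cases I with
    | nil => simp at hI
    | cons a I' => exact ⟨a, I', rfl⟩
  have hne : copies I' (Y ++ [u, v]) ≠ [] := by
    rw [← List.length_pos_iff, length_copies]
    exact Nat.mul_pos (by simpa [Nat.succ_le_iff] using hI) (by simp)
  -- the last gap `v - u` of `X` occurs in `witnessSeq K` inside the first and the last translate
  have hfirst := witnessSeq_gap (L₁ := Y.map (· + a)) (u := u + a) (v := v + a)
    (L₂ := copies I' (Y ++ [u, v])) (by rw [← h]; simp [copies])
  set b := (a :: I').getLast (List.cons_ne_nil _ _)
  have hlast := witnessSeq_gap (L₁ := copies (a :: I').dropLast (Y ++ [u, v]) ++ Y.map (· + b))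
    (u := u + b) (v := v + b) (L₂ := []) (by
      rw [← h]
      conv_rhs => rw [← List.dropLast_append_getLast (List.cons_ne_nil a I')]
      simp [copies, b])
  rw [if_neg hne] at hfirst
  simp only [add_sub_add_right_eq_sub, ↓reduceIte] at hfirst hlast
  omega

theorem eq_singleton_or_eq_singleton_of_copies_eq_witnessSeq {I X : List ℤ}
    (h : copies I X = witnessSeq K) : (∃ t, I = [t]) ∨ ∃ x, X = [x] := by
  have hlen : I.length * X.length = K + 4 := by
    rw [← length_copies, h, length_witnessSeq]
  rcases I with _ | ⟨t, _ | ⟨t', I⟩⟩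
  · simp at hlen
  · exact .inl ⟨t, rfl⟩
  rcases X with _ | ⟨x, _ | ⟨x', X⟩⟩
  · simp at hlen
  · exact .inr ⟨x, rfl⟩
  exact absurd h (copies_ne_witnessSeq (by simp) (by simp))

end witnessSeq

namespace DNode

variable {m : ℕ}

def offsets : DNode m → List (ℤ × Fin m)
  | .con _ => []
  | .vec c d j => (List.range c).map fun k : ℕ => ((k : ℤ) * d, j)
  | .idx I j => I.map fun t => (t, j)
  | .strc ps => ps

theorem le_cost (K : ℕ) (nd : DNode m) : K ≤ nd.cost K := by
  cases nd <;> simp [DNode.cost]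

end DNode

namespace DAG

section Structure

variable (G : DAG) {i : Fin G.m}

theorem flattenAt_of_nodes_eq_con {c : ℕ} (h : G.nodes i = .con c) :
    G.flattenAt i = (List.range c).map (fun k : ℕ => (k : ℤ)) := by
  rw [DAG.flattenAt]; split <;> simp_all [← List.map_eq_flatMap]

theorem flattenAt_of_nodes_eq_vec {c : ℕ} {d : ℤ} {j : Fin G.m} (h : G.nodes i = .vec c d j) :
    G.flattenAt i = copies ((List.range c).map fun k : ℕ => (k : ℤ) * d) (G.flattenAt j) := by
  rw [DAG.flattenAt]; split <;> simp_all [copies, ← List.map_eq_flatMap, List.flatMap_map]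

theorem flattenAt_of_nodes_eq_idx {I : List ℤ} {j : Fin G.m} (h : G.nodes i = .idx I j) :
    G.flattenAt i = copies I (G.flattenAt j) := by
  rw [DAG.flattenAt]; split <;> simp_all [copies]

theorem flattenAt_of_nodes_eq_strc {ps : List (ℤ × Fin G.m)} (h : G.nodes i = .strc ps) :
    G.flattenAt i = ps.flatMap fun p => (G.flattenAt p.2).map (· + p.1) := by
  rw [DAG.flattenAt]; split <;> simp_all
  subst_vars
  exact List.flatMap_subtype (g := fun p => (G.flattenAt p.2).map (· + p.1)) (fun _ _ => rfl)
    |>.trans (by simp)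

theorem unfoldAt_of_nodes_eq_con {c : ℕ} (h : G.nodes i = .con c) : G.unfoldAt i = .con c := by
  rw [DAG.unfoldAt]; split <;> simp_all

theorem unfoldAt_of_nodes_eq_vec {c : ℕ} {d : ℤ} {j : Fin G.m} (h : G.nodes i = .vec c d j) :
    G.unfoldAt i = .vec c d (G.unfoldAt j) := by
  rw [DAG.unfoldAt]; split <;> simp_all

theorem unfoldAt_of_nodes_eq_strc {ps : List (ℤ × Fin G.m)} (h : G.nodes i = .strc ps) :
    G.unfoldAt i = .strc (ps.map fun p => (p.1, G.unfoldAt p.2)) := by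
  rw [DAG.unfoldAt]; split <;> simp_all
  subst_vars
  exact List.map_subtype (g := fun p => (p.1, G.unfoldAt p.2)) (fun _ _ => rfl) |>.trans (by simp)

theorem flattenAt_eq_flatMap_offsets (h : ∀ c, G.nodes i ≠ .con c) :
    G.flattenAt i = (G.nodes i).offsets.flatMap fun p => (G.flattenAt p.2).map (· + p.1) := by
  rcases hi : G.nodes i with c | ⟨c, d, j⟩ | ⟨I, j⟩ | ps
  · exact absurd hi (h c)
  · simp [G.flattenAt_of_nodes_eq_vec hi, DNode.offsets, copies, List.flatMap_map]
  · simp [G.flattenAt_of_nodes_eq_idx hi, DNode.offsets, copies, List.flatMap_map]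
  · simp [G.flattenAt_of_nodes_eq_strc hi, DNode.offsets]

theorem lt_of_mem_offsets {p : ℤ × Fin G.m} (hp : p ∈ (G.nodes i).offsets) : p.2 < i := by
  refine G.acyc i p.2 ?_
  rcases hi : G.nodes i with c | ⟨c, d, j⟩ | ⟨I, j⟩ | ps <;>
    simp only [hi, DNode.offsets, DNode.children, List.mem_map] at hp ⊢
  all_goals aesop

theorem exists_con_infix_flattenAt (hi : G.flattenAt i ≠ []) :
    ∃ z c, G.nodes z = .con c ∧ 0 < c ∧
      ∃ s, (List.range c).map (fun k : ℕ => (k : ℤ) + s) <:+: G.flattenAt i := by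
  induction i using WellFoundedLT.induction with
  | _ i ih =>
  by_cases hcon : ∃ c, G.nodes i = .con c
  · obtain ⟨c, hc⟩ := hcon
    rw [G.flattenAt_of_nodes_eq_con hc] at hi ⊢
    exact ⟨i, c, hc, by simpa [Nat.pos_iff_ne_zero] using hi, 0, by simp⟩
  simp only [not_exists] at hcon
  rw [G.flattenAt_eq_flatMap_offsets hcon] at hi ⊢
  obtain ⟨p, hp, hne⟩ := not_forall₂.mp (mt List.flatMap_eq_nil_iff.mpr hi)
  obtain ⟨z, c, hz, hc, s, hs⟩ := ih p.2 (G.lt_of_mem_offsets hp) (by simpa using hne)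
  refine ⟨z, c, hz, hc, s + p.1, List.IsInfix.trans ?_ (List.infix_flatMap_of_mem' hp)⟩
  simpa [Function.comp_def, add_assoc] using hs.map (· + p.1)

theorem sum_cost_le (K : ℕ) (s : Finset (Fin G.m)) : ∑ i ∈ s, (G.nodes i).cost K ≤ G.cost K :=
  Finset.sum_le_univ_sum_of_nonneg fun _ => Nat.zero_le _

def FlattensToTranslate (i : Fin G.m) (D : List ℤ) : Prop :=
  ∃ s, (G.flattenAt i).map (· + s) = D

end Structure

section LowerBound

variable {G : DAG} {i : Fin G.m} {K : ℕ}

theorem FlattensToTranslate.of_offsets_eq_singleton {D : List ℤ} {p : ℤ × Fin G.m}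
    (hi : G.FlattensToTranslate i D) (h : (G.nodes i).offsets = [p]) :
    G.FlattensToTranslate p.2 D := by
  have hcon : ∀ c, G.nodes i ≠ .con c := fun c hc => by simp [hc, DNode.offsets] at h
  obtain ⟨s, hs⟩ := hi
  rw [G.flattenAt_eq_flatMap_offsets hcon, h] at hs
  exact ⟨p.1 + s, by simpa [Function.comp_def, add_assoc] using hs⟩

theorem exists_con_one_of_flattensToTranslate (hi : G.FlattensToTranslate i (witnessSeq K)) :
    ∃ z, G.nodes z = .con 1 := by
  obtain ⟨s, hs⟩ := hi
  have hne : G.flattenAt i ≠ [] := by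
    rintro h
    simpa [h, length_witnessSeq] using congrArg List.length hs
  obtain ⟨z, c, hz, hc, t, ht⟩ := G.exists_con_infix_flattenAt hne
  have hinf : (List.range c).map (fun k : ℕ => (k : ℤ) + (t + s)) <:+: witnessSeq K := by
    simpa [← hs, Function.comp_def, add_assoc] using ht.map (· + s)
  obtain rfl : c = 1 := by have := le_one_of_map_range_infix_witnessSeq hinf; omega
  exact ⟨z, hz⟩

theorem not_flattensToTranslate_witnessSeq_of_nodes_eq_con {c : ℕ} (h : G.nodes i = .con c) :
    ¬ G.FlattensToTranslate i (witnessSeq K) := by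
  rintro ⟨s, hs⟩
  rw [G.flattenAt_of_nodes_eq_con h] at hs
  exact map_range_ne_witnessSeq c s 1 (by simpa [Function.comp_def, add_comm] using hs)

theorem not_flattensToTranslate_witnessSeq_of_nodes_eq_vec {c : ℕ} {d : ℤ} {j : Fin G.m}
    (h : G.nodes i = .vec c d j) (hc : c ≠ 1) : ¬ G.FlattensToTranslate i (witnessSeq K) := by
  rintro ⟨s, hs⟩
  rw [G.flattenAt_of_nodes_eq_vec h, map_add_copies] at hs
  obtain ⟨t, ht⟩ | ⟨x, hx⟩ := eq_singleton_or_eq_singleton_of_copies_eq_witnessSeq hs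
  · simpa [hc] using congrArg List.length ht
  · rw [hx, copies_singleton] at hs
    exact map_range_ne_witnessSeq c (x + s) d
      (by simpa [Function.comp_def, add_assoc, add_comm s] using hs)

theorem le_cost_of_nodes_eq_idx {I : List ℤ} {j : Fin G.m} (h : G.nodes i = .idx I j)
    (hI : I.length ≠ 1) (hi : G.FlattensToTranslate i (witnessSeq K)) :
    3 * K + 4 ≤ G.cost K := by
  obtain ⟨z, hz⟩ := exists_con_one_of_flattensToTranslate hi
  obtain ⟨s, hs⟩ := hi
  rw [G.flattenAt_of_nodes_eq_idx h, map_add_copies] at hs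
  obtain ⟨t, ht⟩ | ⟨x, hx⟩ := eq_singleton_or_eq_singleton_of_copies_eq_witnessSeq hs
  · simpa [hI] using congrArg List.length ht
  rw [hx, copies_singleton] at hs
  have hIlen : I.length = K + 4 := by simpa [length_witnessSeq] using congrArg List.length hs
  have hzi : z ≠ i := by rintro rfl; simp [hz] at h
  have hcost := G.sum_cost_le K {z, i}
  rw [Finset.sum_pair hzi, hz, h] at hcost
  simp only [DNode.cost] at hcost
  omega

theorem le_cost_of_nodes_eq_strc {ps : List (ℤ × Fin G.m)} (h : G.nodes i = .strc ps)
    (hps : ps.length ≠ 1) (hi : G.FlattensToTranslate i (witnessSeq K)) :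
    3 * K + 4 ≤ G.cost K := by
  obtain ⟨z, hz⟩ := exists_con_one_of_flattensToTranslate hi
  obtain ⟨s, hs⟩ := hi
  rw [G.flattenAt_of_nodes_eq_strc h] at hs
  by_cases hbig : ∃ p ∈ ps, 2 ≤ (G.flattenAt p.2).length
  · obtain ⟨p, hp, hp2⟩ := hbig
    have hps2 : 2 ≤ ps.length := by have := List.length_pos_of_mem hp; omega
    have hpi : p.2 ≠ i := (G.lt_of_mem_offsets (p := p) (by simpa [h, DNode.offsets])).ne
    have hzi : z ≠ i := by rintro rfl; simp [hz] at h
    have hzp : z ≠ p.2 := by rintro rfl; simp [G.flattenAt_of_nodes_eq_con hz] at hp2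
    have hcost := G.sum_cost_le K {z, p.2, i}
    rw [Finset.sum_insert (by simp [hzi, hzp]), Finset.sum_pair hpi, hz, h] at hcost
    have := DNode.le_cost K (G.nodes p.2)
    simp only [DNode.cost] at hcost this
    omega
  · simp only [not_exists, not_and, not_le] at hbig
    have hlen : K + 4 ≤ ps.length := by
      calc K + 4 = (ps.flatMap fun p => (G.flattenAt p.2).map (· + p.1)).length := by
            rw [← length_witnessSeq, ← hs, List.length_map]
        _ ≤ ps.length := by
            rw [List.length_flatMap]
            simpa using List.sum_le_card_nsmul
              (ps.map fun p => ((G.flattenAt p.2).map (· + p.1)).length) 1 (by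
                simp only [List.mem_map]
                rintro _ ⟨p, hp, rfl⟩
                simpa using Nat.le_of_lt_succ (hbig p hp))
    have hcost := G.sum_cost_le K {i}
    rw [Finset.sum_singleton, h] at hcost
    simp only [DNode.cost] at hcost
    omega

theorem le_cost_of_offsets_length_ne_one (hi : G.FlattensToTranslate i (witnessSeq K))
    (h : (G.nodes i).offsets.length ≠ 1) : 3 * K + 4 ≤ G.cost K := by
  rcases hn : G.nodes i with c | ⟨c, d, j⟩ | ⟨I, j⟩ | ps <;>
    simp only [hn, DNode.offsets, List.length_map, List.length_range] at h
  · exact absurd hi (not_flattensToTranslate_witnessSeq_of_nodes_eq_con hn)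
  · exact absurd hi (not_flattensToTranslate_witnessSeq_of_nodes_eq_vec hn h)
  · exact le_cost_of_nodes_eq_idx hn h hi
  · exact le_cost_of_nodes_eq_strc hn h hi

theorem le_cost_of_flattensToTranslate (hi : G.FlattensToTranslate i (witnessSeq K)) :
    3 * K + 4 ≤ G.cost K := by
  induction i using WellFoundedLT.induction with
  | _ i ih =>
  by_cases h : (G.nodes i).offsets.length = 1
  · obtain ⟨p, hp⟩ := List.length_eq_one_iff.mp h
    exact ih p.2 (G.lt_of_mem_offsets (by simp [hp])) (hi.of_offsets_eq_singleton hp)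
  · exact le_cost_of_offsets_length_ne_one hi h

theorem le_cost_of_flatten_eq_witnessSeq (h : G.flatten = witnessSeq K) : 3 * K + 4 ≤ G.cost K :=
  le_cost_of_flattensToTranslate (i := G.root) ⟨0, by simpa [DAG.flatten] using h⟩

end LowerBound

end DAG

abbrev witnessDAG (K : ℕ) : DAG where
  m := 3
  hm := by norm_num
  nodes := ![.con 1, .vec (K + 3) 2 0, .strc [(0, 1), (2 * K + 11, 0)]]
  acyc := by
    intro i j hj
    fin_cases i <;> simp [DNode.children] at hj <;> rcases hj with rfl | rfl <;> decide

theorem flatten_witnessDAG (K : ℕ) : (witnessDAG K).flatten = witnessSeq K := by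
  have h0 : (witnessDAG K).flattenAt (0 : Fin 3) = [0] := by
    rw [(witnessDAG K).flattenAt_of_nodes_eq_con (i := (0 : Fin 3)) rfl]; rfl
  have h1 : (witnessDAG K).flattenAt (1 : Fin 3) =
      (List.range (K + 3)).map fun k : ℕ => (k : ℤ) * 2 := by
    rw [(witnessDAG K).flattenAt_of_nodes_eq_vec (i := (1 : Fin 3)) rfl, h0, copies_singleton]
    simp [Function.comp_def]
  show (witnessDAG K).flattenAt (2 : Fin 3) = _
  rw [(witnessDAG K).flattenAt_of_nodes_eq_strc (i := (2 : Fin 3)) rfl]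
  simp [List.flatMap_cons, h0, h1, witnessSeq]

theorem cost_witnessDAG (K : ℕ) : (witnessDAG K).cost K = 3 * K + 4 := by
  show ∑ i : Fin 3, ((witnessDAG K).nodes i).cost K = _
  rw [Fin.sum_univ_three]
  show K + K + (K + 2 * 2) = _
  ring

theorem unfold_witnessDAG (K : ℕ) :
    (witnessDAG K).unfold = .strc [(0, .vec (K + 3) 2 (.con 1)), (2 * K + 11, .con 1)] := by
  show (witnessDAG K).unfoldAt (2 : Fin 3) = _
  simp [(witnessDAG K).unfoldAt_of_nodes_eq_strc (i := (2 : Fin 3)) rfl,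
    (witnessDAG K).unfoldAt_of_nodes_eq_vec (i := (1 : Fin 3)) rfl,
    (witnessDAG K).unfoldAt_of_nodes_eq_con (i := (0 : Fin 3)) rfl]

/-- Unfolding a cost-minimal type DAG does not necessarily yield a cost-optimal type
tree: for some displacement sequence `D`, some cost-minimal DAG representing `D`
unfolds to a tree that is beaten by another tree representing `D`. -/
theorem stmt18 (K : ℕ) (hK : 0 < K) :
    ∃ (D : List ℤ) (G : DAG),
      G.flatten = D ∧
      (∀ G' : DAG, G'.flatten = D → G.cost K ≤ G'.cost K) ∧
      ∃ T' : TT, flatten T' = D ∧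
        cost K K K K 1 T' < cost K K K K 1 G.unfold := by
  refine ⟨witnessSeq K, witnessDAG K, flatten_witnessDAG K, fun G hG => ?_,
    .idx (witnessSeq K) (.con 1), ?_, ?_⟩
  · rw [cost_witnessDAG]
    exact DAG.le_cost_of_flatten_eq_witnessSeq hG
  · simp [flatten]
  · rw [unfold_witnessDAG]
    simp only [cost, length_witnessSeq, List.attach_cons, List.attach_nil, List.map_cons,
      List.map_nil, List.sum_cons, List.sum_nil, List.length_cons, List.length_nil]
    omega
end
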